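/- arXiv:2410.08467 — 7 statements merged into one kernel-verified Lean document; each statement's English description precedes it below -/
import Mathlib

section
/- Let π_K(x,N,p) = C(N,x) p^x (1−p)^{N−x} be the binomial (Krawtchouk) distribution. For 0 < a, b < 1, set p = b/(1−a+ab) and K(x,y) = ∑_{z=0}^{min(x,y)} π_K(x−z, N−z, b) π_K(z, y, a). Then K satisfies detailed balance with respect to π_K(·,N,p): K(x,y) π_K(y,N,p) = K(y,x) π_K(x,N,p) for all x,y ∈ {0,...,N}. -/
open Finset

/-- The binomial (Krawtchouk) distribution, zero for `x > M` since `choose = 0`. -/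
noncomputable def piK (x M : ℕ) (q : ℝ) : ℝ := (M.choose x : ℝ) * q ^ x * (1 - q) ^ (M - x)

lemma choose_trans_aux (n k m : ℕ) (hm : m ≤ k) (hk : k ≤ n) :
    n.choose k * k.choose m = n.choose m * (n - m).choose (k - m) := by
  have hM : 0 < Nat.factorial m * (Nat.factorial (k - m) * Nat.factorial (n - k)) :=
    Nat.mul_pos (Nat.factorial_pos _) (Nat.mul_pos (Nat.factorial_pos _) (Nat.factorial_pos _))
  apply Nat.eq_of_mul_eq_mul_right hM
  have h1 := Nat.choose_mul_factorial_mul_factorial hk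
  have h2 := Nat.choose_mul_factorial_mul_factorial hm
  have h3 := Nat.choose_mul_factorial_mul_factorial (hm.trans hk)
  have h4 := Nat.choose_mul_factorial_mul_factorial (show k - m ≤ n - m by omega)
  rw [show n - m - (k - m) = n - k by omega] at h4
  zify at h1 h2 h3 h4 ⊢
  linear_combination ((n.choose k : ℤ) * Nat.factorial (n - k)) * h2 + h1 - h3 -
    ((n.choose m : ℤ) * Nat.factorial m) * h4

lemma half_balance (N : ℕ) (a b : ℝ)
    (ha : 0 < a) (ha1 : a < 1) (hb : 0 < b) (hb1 : b < 1)
    (p : ℝ) (hp : p = b / (1 - a + a * b))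
    (K : ℕ → ℕ → ℝ)
    (hK : ∀ x y, K x y =
      ∑ z ∈ Finset.range (min x y + 1), piK (x - z) (N - z) b * piK z y a)
    (x y : ℕ) (hxy : x ≤ y) (hy : y ≤ N) :
    K x y * piK y N p = K y x * piK x N p := by
  have hD : (0:ℝ) < 1 - a + a * b := by nlinarith
  have hD' : (1:ℝ) - a + a * b ≠ 0 := ne_of_gt hD
  have h1p : 1 - p = (1 - a) * (1 - b) / (1 - a + a * b) := by
    rw [hp, eq_div_iff hD', sub_mul, div_mul_cancel₀ _ hD']; ring
  rw [hK x y, hK y x, min_eq_left hxy, min_eq_right hxy, Finset.sum_mul, Finset.sum_mul]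
  refine Finset.sum_congr rfl fun z hz => ?_
  have hzx : z ≤ x := by have := Finset.mem_range.mp hz; omega
  obtain ⟨i, rfl⟩ : ∃ i, x = z + i := ⟨x - z, by omega⟩
  obtain ⟨t, rfl⟩ : ∃ t, y = z + i + t := ⟨y - (z + i), by omega⟩
  obtain ⟨v, rfl⟩ : ∃ v, N = z + i + t + v := ⟨N - (z + i + t), by omega⟩
  have en1 : (z+i+t+v).choose (z+i+t) * (z+i+t).choose z
      = (z+i+t+v).choose z * (i+t+v).choose (i+t) := by
    have h := choose_trans_aux (z+i+t+v) (z+i+t) z (by omega) (by omega)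
    rw [show z+i+t+v - z = i+t+v by omega, show z+i+t - z = i+t by omega] at h
    exact h
  have en2 : (z+i+t+v).choose (z+i) * (z+i).choose z
      = (z+i+t+v).choose z * (i+t+v).choose i := by
    have h := choose_trans_aux (z+i+t+v) (z+i) z (by omega) (by omega)
    rw [show z+i+t+v - z = i+t+v by omega, show z+i - z = i by omega] at h
    exact h
  have e1 : ((z+i+t+v).choose (z+i+t) * (z+i+t).choose z : ℝ)
      = ((z+i+t+v).choose z : ℝ) * ((i+t+v).choose (i+t)) := by exact_mod_cast en1
  have e2 : ((z+i+t+v).choose (z+i) * (z+i).choose z : ℝ)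
      = ((z+i+t+v).choose z : ℝ) * ((i+t+v).choose i) := by exact_mod_cast en2
  simp only [piK, show z+i-z = i by omega, show z+i+t-z = i+t by omega,
    show z+i+t+v-z = i+t+v by omega, show i+t+v-i = t+v by omega,
    show i+t+v-(i+t) = v by omega, show z+i+t+v-(z+i+t) = v by omega,
    show z+i+t+v-(z+i) = t+v by omega]
  have hpk : ∀ k : ℕ, p ^ k = b ^ k / (1-a+a*b) ^ k := fun k => by rw [hp, div_pow]
  have h1pk : ∀ k : ℕ, (1-p) ^ k = (1-a)^k * (1-b)^k / (1-a+a*b) ^ k := fun k => by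
    rw [h1p, div_pow, mul_pow]
  simp only [hpk, h1pk]
  linear_combination
    (((i+t+v).choose i : ℝ) * (b^i * (1-b)^(t+v) * a^z * (1-a)^(i+t) *
      (b^(z+i+t)/(1-a+a*b)^(z+i+t)) * ((1-a)^v*(1-b)^v/(1-a+a*b)^v))) * e1 -
    (((i+t+v).choose (i+t) : ℝ) * (b^(i+t) * (1-b)^v * a^z * (1-a)^i *
      (b^(z+i)/(1-a+a*b)^(z+i)) * ((1-a)^(t+v)*(1-b)^(t+v)/(1-a+a*b)^(t+v)))) * e2

theorem krawtchouk_type_i_detailed_balance (N : ℕ) (a b : ℝ)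
    (ha : 0 < a) (ha1 : a < 1) (hb : 0 < b) (hb1 : b < 1)
    (p : ℝ) (hp : p = b / (1 - a + a * b))
    (K : ℕ → ℕ → ℝ)
    (hK : ∀ x y, K x y =
      ∑ z ∈ Finset.range (min x y + 1), piK (x - z) (N - z) b * piK z y a) :
    ∀ x ≤ N, ∀ y ≤ N, K x y * piK y N p = K y x * piK x N p := by
  intro x hx y hy
  rcases le_total x y with h | h
  · exact half_balance N a b ha ha1 hb hb1 p hp K hK x y h hy
  · exact (half_balance N a b ha ha1 hb hb1 p hp K hK y x h hx).symm
end

section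
/- Let π_K(x,N,p) = C(N,x) p^x (1−p)^{N−x}. For 0 < a, b < 1 with p = b/(1−a+b) ∈ (0,1), the matrix K(x,y) = ∑_{z=max(0,x+y−N)}^{min(x,y)} π_K(x−z, N−y, b) π_K(z, y, a) satisfies detailed balance K(x,y) π_K(y,N,p) = K(y,x) π_K(x,N,p) for all x,y ∈ {0,...,N}. -/
open Finset

lemma choose_key (z i j m : ℕ) :
    (z+i+j+m).choose (z+j) * ((z+j).choose z) * ((i+m).choose i) *
      (z.factorial * i.factorial * j.factorial * m.factorial) = (z+i+j+m).factorial := by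
  have h1 : (z+j).choose z * z.factorial * j.factorial = (z+j).factorial := by
    have := Nat.choose_mul_factorial_mul_factorial (Nat.le_add_right z j)
    simpa [Nat.add_sub_cancel_left] using this
  have h2 : (i+m).choose i * i.factorial * m.factorial = (i+m).factorial := by
    have := Nat.choose_mul_factorial_mul_factorial (Nat.le_add_right i m)
    simpa [Nat.add_sub_cancel_left] using this
  have hle : z + j ≤ z+i+j+m := by omega
  have h3 : (z+i+j+m).choose (z+j) * (z+j).factorial * (i+m).factorial
      = (z+i+j+m).factorial := by
    have := Nat.choose_mul_factorial_mul_factorial hle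
    have hs : z+i+j+m - (z+j) = i+m := by omega
    rw [hs] at this
    exact this
  calc (z+i+j+m).choose (z+j) * ((z+j).choose z) * ((i+m).choose i) *
      (z.factorial * i.factorial * j.factorial * m.factorial)
      = (z+i+j+m).choose (z+j) * ((z+j).choose z * z.factorial * j.factorial) *
        ((i+m).choose i * i.factorial * m.factorial) := by ring
    _ = (z+i+j+m).choose (z+j) * (z+j).factorial * (i+m).factorial := by rw [h1, h2]
    _ = (z+i+j+m).factorial := h3

lemma choose_sym (z i j m : ℕ) :
    (z+i+j+m).choose (z+j) * ((z+j).choose z) * ((i+m).choose i) =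
    (z+i+j+m).choose (z+i) * ((z+i).choose z) * ((j+m).choose j) := by
  have hpos : 0 < z.factorial * i.factorial * j.factorial * m.factorial := by
    positivity
  apply Nat.eq_of_mul_eq_mul_right hpos
  rw [choose_key z i j m]
  have := choose_key z j i m
  have he : z + j + i + m = z + i + j + m := by ring
  rw [he] at this
  rw [← this]
  ring

theorem krawtchouk_type_ii_detailed_balance (N : ℕ) (a b : ℝ)
    (ha : 0 < a) (ha1 : a < 1) (hb : 0 < b) (hb1 : b < 1)
    (p : ℝ) (hp : p = b / (1 - a + b))
    (K : ℕ → ℕ → ℝ)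
    (hK : ∀ x y, K x y =
      ∑ z ∈ Finset.Icc (x + y - N) (min x y), piK (x - z) (N - y) b * piK z y a) :
    ∀ x ≤ N, ∀ y ≤ N, K x y * piK y N p = K y x * piK x N p := by
  have hs : (1 : ℝ) - a + b ≠ 0 := by nlinarith
  have h1p : 1 - b / (1 - a + b) = (1 - a) / (1 - a + b) := by
    field_simp
    ring
  intro x hx y hy
  rw [hK x y, hK y x, Finset.sum_mul, Finset.sum_mul]
  rw [show y + x - N = x + y - N by omega, min_comm y x]
  apply Finset.sum_congr rfl
  intro z hz
  simp only [Finset.mem_Icc, le_min_iff] at hz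
  have hz1 := hz.1
  have hzx := hz.2.1
  have hzy := hz.2.2
  obtain ⟨i, hi⟩ : ∃ i, x = z + i := ⟨x - z, by omega⟩
  obtain ⟨j, hj⟩ : ∃ j, y = z + j := ⟨y - z, by omega⟩
  obtain ⟨m, hm⟩ : ∃ m, N = z + i + j + m := ⟨N - (x + y - z), by omega⟩
  subst hi hj hm hp
  have e1 : z + i - z = i := by omega
  have e2 : z + j - z = j := by omega
  have e3 : z + i + j + m - (z + j) = i + m := by omega
  have e4 : z + i + j + m - (z + i) = j + m := by omega
  have e5 : i + m - i = m := by omega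
  have e6 : j + m - j = m := by omega
  have e7 : z + j - z = j := by omega
  have e8 : z + i - z = i := by omega
  simp only [piK, e1, e2, e3, e4, e5, e6, e7, e8, h1p]
  have hC : (((z+i+j+m).choose (z+j) * ((z+j).choose z) * ((i+m).choose i) : ℕ) : ℝ) =
      (((z+i+j+m).choose (z+i) * ((z+i).choose z) * ((j+m).choose j) : ℕ) : ℝ) := by
    exact_mod_cast congrArg (Nat.cast : ℕ → ℝ) (choose_sym z i j m)
  push_cast at hC
  simp only [div_pow]
  field_simp
  linear_combination (b ^ (z+i+j) * (1-a)^(i+j+m) * (1-b)^m * (1-a+b)^(z+i+j+m)) * hC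
end

section
/- Let π_K(x,N,p) = C(N,x) p^x (1−p)^{N−x}. For 0 < a, b < 1 with p = ab/(1−b+ab), the matrix K(x,y) = ∑_{z=max(x,y)}^{N} π_K(x, z, b) π_K(z−y, N−y, a) satisfies detailed balance K(x,y) π_K(y,N,p) = K(y,x) π_K(x,N,p) for all x,y ∈ {0,...,N}. -/
open Finset

lemma piK_term_eq (N x y z : ℕ) (a b : ℝ)
    (ha : 0 < a) (ha1 : a < 1) (hb : 0 < b) (hb1 : b < 1)
    (hxz : x ≤ z) (hyz : y ≤ z) (hzN : z ≤ N) :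
    piK x z b * piK (z - y) (N - y) a * piK y N (a * b / (1 - b + a * b))
      = ((z.choose x : ℝ) * (N.choose z : ℝ) * (z.choose y : ℝ)) *
        a ^ z * (1 - a) ^ (N - z) * b ^ (x + y) * (1 - b) ^ (N + z - x - y)
          / (1 - b + a * b) ^ N := by
  have hD : (0:ℝ) < 1 - b + a * b := by nlinarith
  have hD' : (1:ℝ) - b + a * b ≠ 0 := ne_of_gt hD
  have ha0 : a ≠ 0 := ne_of_gt ha
  have hb0 : b ≠ 0 := ne_of_gt hb
  have hb1' : (1:ℝ) - b ≠ 0 := by linarith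
  have hc : ((N - y).choose (z - y) : ℝ) * (N.choose y) = (N.choose z) * (z.choose y) := by
    have h2 : N.choose z * z.choose y = N.choose y * (N - y).choose (z - y) :=
      Nat.choose_mul hyz
    have h3 : (N - y).choose (z - y) * N.choose y = N.choose z * z.choose y := by
      rw [Nat.mul_comm]; exact h2.symm
    exact_mod_cast h3
  have e1 : N - y - (z - y) = N - z := by omega
  have e2 : N + z - x - y = (N - y) + (z - x) := by omega
  have hp1 : 1 - a * b / (1 - b + a * b) = (1 - b) / (1 - b + a * b) := by
    field_simp
    ring
  simp only [piK, e1, hp1, e2]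
  rw [pow_sub₀ a ha0 hyz, pow_add, pow_sub₀ (1 - b) hb1' hxz, div_pow, div_pow, mul_pow]
  have eN : (1 - b + a * b) ^ N = (1 - b + a * b) ^ y * (1 - b + a * b) ^ (N - y) := by
    rw [← pow_add]; congr 1; omega
  have e3 : (1 - b) ^ x * (1 - b) ^ (z - x) = (1 - b) ^ z := by
    rw [← pow_add]; congr 1; omega
  field_simp
  rw [show (1 - b + b * a) ^ N = (1 - b + b * a) ^ y * (1 - b + b * a) ^ (N - y) by
    rw [← pow_add]; congr 1; omega]
  rw [div_eq_div_iff (mul_ne_zero (pow_ne_zero _ (by rw [mul_comm b a]; exact hD')) (pow_ne_zero _ (by rw [mul_comm b a]; exact hD')))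
    (mul_ne_zero (pow_ne_zero _ (by rw [mul_comm b a]; exact hD')) (pow_ne_zero _ (by rw [mul_comm b a]; exact hD')))]
  ring_nf
  linear_combination ((z.choose x : ℝ) * (1 - a) ^ (N - z)
      * (1 - b) ^ (N - y) * (1-b)^z * (1-b+a*b)^y * (1-b+a*b)^(N-y)) * hc
    - ((z.choose x : ℝ) * (N.choose z : ℝ) * (z.choose y : ℝ)
      * (1 - a) ^ (N - z) * (1 - b) ^ (N - y) * (1-b+a*b)^y * (1-b+a*b)^(N-y)) * e3

theorem krawtchouk_type_iii_detailed_balance (N : ℕ) (a b : ℝ)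
    (ha : 0 < a) (ha1 : a < 1) (hb : 0 < b) (hb1 : b < 1)
    (p : ℝ) (hp : p = a * b / (1 - b + a * b))
    (K : ℕ → ℕ → ℝ)
    (hK : ∀ x y, K x y =
      ∑ z ∈ Finset.Icc (max x y) N, piK x z b * piK (z - y) (N - y) a) :
    ∀ x ≤ N, ∀ y ≤ N, K x y * piK y N p = K y x * piK x N p := by
  intro x hx y hy
  subst hp
  rw [hK, hK, max_comm y x, Finset.sum_mul, Finset.sum_mul]
  refine Finset.sum_congr rfl fun z hz => ?_
  simp only [Finset.mem_Icc, max_le_iff] at hz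
  obtain ⟨⟨hxz, hyz⟩, hzN⟩ := hz
  rw [piK_term_eq N x y z a b ha ha1 hb hb1 hxz hyz hzN,
    piK_term_eq N y x z a b ha ha1 hb hb1 hyz hxz hzN]
  ring_nf
  rw [show z + N - x - y = z + N - y - x by omega]
end

section
/- For the type (i) Krawtchouk convolution K(x,y) = ∑_{z=0}^{min(x,y)} π_K(x−z,N−z,b) π_K(z,y,a) with p = b/(1−a+ab), the Krawtchouk polynomials are left eigenvectors: ∑_{x=0}^{N} K(x,y) P_n(x,p) = aⁿ(1−b)ⁿ P_n(y,p) for all n, y ∈ {0,...,N}. -/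
open Finset

/-- Krawtchouk polynomial `P_n(x,p) = ₂F₁(-n,-x;-N | 1/p)` as a terminating sum. -/
noncomputable def kraw (N : ℕ) (p : ℝ) (n x : ℕ) : ℝ :=
  ∑ k ∈ Finset.range (min n x + 1),
    ((∏ j ∈ Finset.range k, (-(n : ℝ) + j)) * (∏ j ∈ Finset.range k, (-(x : ℝ) + j))) /
      ((∏ j ∈ Finset.range k, (-(N : ℝ) + j)) * (Nat.factorial k)) * (1 / p) ^ k

section Aux

open Polynomial

lemma prodNeg (x m : ℕ) : ∏ j ∈ range m, (-(x:ℝ) + j) = (-1)^m * (x.descFactorial m : ℝ) := by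
  induction m with
  | zero => simp
  | succ m ih =>
    rw [prod_range_succ, ih]
    rcases le_or_gt m x with h | h
    · rw [Nat.descFactorial_succ]
      push_cast [h]
      ring
    · rw [Nat.descFactorial_eq_zero_iff_lt.2 h,
        Nat.descFactorial_eq_zero_iff_lt.2 (h.trans (Nat.lt_succ_self m))]
      simp

lemma natIdent {N n m : ℕ} (hm : m ≤ n) (hn : n ≤ N) :
    N.choose n * n.descFactorial m = (N-m).choose (n-m) * N.descFactorial m := by
  rw [Nat.descFactorial_eq_factorial_mul_choose, Nat.descFactorial_eq_factorial_mul_choose,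
    ← Nat.mul_assoc, ← Nat.mul_assoc, Nat.mul_comm (N.choose n) (Nat.factorial m),
    Nat.mul_assoc, Nat.choose_mul hm, Nat.mul_comm ((N-m).choose (n-m)) (Nat.factorial m),
    Nat.mul_assoc, Nat.mul_comm (N.choose m)]

lemma natIdent2 {N n x k : ℕ} (hk : k ≤ n) (hn : n ≤ N) :
    N.choose n * n.descFactorial k * x.descFactorial k
      = x.choose k * (N-k).choose (n-k) * (N.descFactorial k * Nat.factorial k) := by
  rw [Nat.descFactorial_eq_factorial_mul_choose x k]
  calc N.choose n * n.descFactorial k * (Nat.factorial k * x.choose k)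
      = (N.choose n * n.descFactorial k) * Nat.factorial k * x.choose k := by ring
    _ = ((N-k).choose (n-k) * N.descFactorial k) * Nat.factorial k * x.choose k := by
        rw [natIdent hk hn]
    _ = _ := by ring

lemma innerVdm {N n x m : ℕ} (hx : x ≤ N) (hm : m ≤ n) :
    ∑ k ∈ range (n+1), x.choose k * k.choose m * (N-x).choose (n-k)
      = x.choose m * (N-m).choose (n-m) := by
  have h1 : ∀ k, m ≤ k → x.choose k * k.choose m = x.choose m * (x-m).choose (k-m) := by
    intro k h
    rcases le_or_gt k x with h2 | h2
    · exact Nat.choose_mul h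
    · rcases le_or_gt m x with h3 | h3
      · rw [Nat.choose_eq_zero_of_lt h2, Nat.choose_eq_zero_of_lt (show x-m < k-m by omega),
          Nat.zero_mul, Nat.mul_zero]
      · rw [Nat.choose_eq_zero_of_lt h2, Nat.choose_eq_zero_of_lt h3, Nat.zero_mul, Nat.zero_mul]
  have h2 : ∑ k ∈ Finset.Ico 0 m, x.choose k * k.choose m * (N-x).choose (n-k) = 0 := by
    apply Finset.sum_eq_zero
    intro k hk
    simp only [Finset.mem_Ico] at hk
    rw [Nat.choose_eq_zero_of_lt hk.2, Nat.mul_zero, Nat.zero_mul]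
  rw [range_eq_Ico, ← Finset.sum_Ico_consecutive _ (Nat.zero_le m) (by omega : m ≤ n+1), h2,
    Nat.zero_add, Finset.sum_Ico_eq_sum_range]
  have h3 : n + 1 - m = n - m + 1 := by omega
  rw [h3]
  have h4 : ∀ i ∈ range (n-m+1), x.choose (m+i) * (m+i).choose m * (N-x).choose (n-(m+i))
      = x.choose m * ((x-m).choose i * (N-x).choose ((n-m)-i)) := by
    intro i _
    rw [h1 (m+i) (Nat.le_add_right m i)]
    have e1 : m + i - m = i := by omega
    have e2 : n - (m + i) = n - m - i := by omega
    rw [e1, e2, Nat.mul_assoc]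
  rw [Finset.sum_congr rfl h4, ← Finset.mul_sum]
  rcases le_or_gt m x with hmx | hmx
  · congr 1
    have hV := Nat.add_choose_eq (x-m) (N-x) (n-m)
    rw [Finset.Nat.sum_antidiagonal_eq_sum_range_succ_mk] at hV
    have e3 : x - m + (N - x) = N - m := by omega
    rw [e3] at hV
    exact hV.symm
  · rw [Nat.choose_eq_zero_of_lt hmx, Nat.zero_mul, Nat.zero_mul]

lemma kraw_ext (N n x : ℕ) (p : ℝ) :
    kraw N p n x = ∑ k ∈ range (n+1),
      ((∏ j ∈ Finset.range k, (-(n : ℝ) + j)) * (∏ j ∈ Finset.range k, (-(x : ℝ) + j))) /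
        ((∏ j ∈ Finset.range k, (-(N : ℝ) + j)) * (Nat.factorial k)) * (1 / p) ^ k := by
  unfold kraw
  apply Finset.sum_subset
  · exact Finset.range_subset_range.2 (by omega)
  · intro k hk1 hk2
    simp only [Finset.mem_range] at hk1 hk2
    have hxk : x < k := by omega
    have h0 : ∏ j ∈ Finset.range k, (-(x : ℝ) + j) = 0 := by
      apply Finset.prod_eq_zero (Finset.mem_range.2 hxk)
      simp
    rw [h0, mul_zero, zero_div, zero_mul]

lemma algebra1 (cN dn dx dN fk cx cr q : ℝ) (k : ℕ) (hdN : dN ≠ 0) (hfk : fk ≠ 0)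
    (key : cN * dn * dx = cx * cr * (dN * fk)) :
    cN * ((((-1:ℝ)^k * dn) * ((-1:ℝ)^k * dx)) / (((-1:ℝ)^k * dN) * fk) * q^k)
      = cx * cr * (-q)^k := by
  have h1 : (-q)^k = (-1:ℝ)^k * q^k := by rw [neg_pow]
  have h2 : ((-1:ℝ)^k) ≠ 0 := by simp [pow_ne_zero]
  rw [h1]
  field_simp
  rw [key]
  ring

lemma krawAlt (N n x : ℕ) (p : ℝ) (hn : n ≤ N) (hx : x ≤ N) :
    (N.choose n : ℝ) * kraw N p n x
      = ∑ k ∈ range (n+1), (x.choose k : ℝ) * ((N-x).choose (n-k) : ℝ) * (1 - 1/p)^k := by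
  have hrhs : ∀ k ∈ range (n+1), (x.choose k : ℝ) * ((N-x).choose (n-k) : ℝ) * (1 - 1/p)^k
      = ∑ m ∈ range (n+1),
          (x.choose k : ℝ) * ((N-x).choose (n-k) : ℝ) * ((k.choose m : ℝ) * (-(1/p))^m) := by
    intro k hk
    simp only [Finset.mem_range] at hk
    have h0 : (1 - 1/p) = (-(1/p)) + 1 := by ring
    rw [h0, add_pow, Finset.mul_sum]
    have h1 : ∀ m ∈ range (k+1),
        (x.choose k : ℝ) * ((N-x).choose (n-k) : ℝ) * ((-(1/p))^m * 1^(k-m) * (k.choose m : ℝ))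
        = (x.choose k : ℝ) * ((N-x).choose (n-k) : ℝ) * ((k.choose m : ℝ) * (-(1/p))^m) := by
      intro m _
      simp only [one_pow, mul_one]
      ring
    rw [Finset.sum_congr rfl h1]
    apply Finset.sum_subset
    · exact Finset.range_subset_range.2 (by omega)
    · intro m hm1 hm2
      simp only [Finset.mem_range] at hm1 hm2
      rw [Nat.choose_eq_zero_of_lt (by omega : k < m)]
      simp
  rw [Finset.sum_congr rfl hrhs, Finset.sum_comm]
  have hrhs2 : ∀ m ∈ range (n+1),
      (∑ k ∈ range (n+1),
        (x.choose k : ℝ) * ((N-x).choose (n-k) : ℝ) * ((k.choose m : ℝ) * (-(1/p))^m))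
      = (x.choose m : ℝ) * ((N-m).choose (n-m) : ℝ) * (-(1/p))^m := by
    intro m hm
    simp only [Finset.mem_range] at hm
    have h2 : ∀ k ∈ range (n+1), (x.choose k : ℝ) * ((N-x).choose (n-k) : ℝ) *
        ((k.choose m : ℝ) * (-(1/p))^m)
        = ((x.choose k * k.choose m * (N-x).choose (n-k) : ℕ) : ℝ) * (-(1/p))^m := by
      intro k _
      push_cast
      ring
    rw [Finset.sum_congr rfl h2, ← Finset.sum_mul, ← Nat.cast_sum,
      innerVdm hx (by omega : m ≤ n)]
    push_cast
    ring
  rw [Finset.sum_congr rfl hrhs2]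
  rw [kraw_ext, Finset.mul_sum]
  apply Finset.sum_congr rfl
  intro k hk
  simp only [Finset.mem_range] at hk
  have hk' : k ≤ n := by omega
  rw [prodNeg n k, prodNeg x k, prodNeg N k]
  have hdN : (N.descFactorial k : ℝ) ≠ 0 :=
    Nat.cast_ne_zero.2 (fun h => by
      have := Nat.descFactorial_eq_zero_iff_lt.1 h; omega)
  have hfk : (Nat.factorial k : ℝ) ≠ 0 := Nat.cast_ne_zero.2 (Nat.factorial_ne_zero k)
  have key : (N.choose n : ℝ) * (n.descFactorial k : ℝ) * (x.descFactorial k : ℝ)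
      = (x.choose k : ℝ) * ((N-k).choose (n-k) : ℝ)
        * ((N.descFactorial k : ℝ) * (Nat.factorial k : ℝ)) := by
    exact_mod_cast natIdent2 hk' hn
  exact algebra1 _ _ _ _ _ _ _ _ k hdN hfk key

lemma binom_sum (M : ℕ) (s t : ℝ) :
    ∑ v ∈ range (M+1), (M.choose v : ℝ) * s^v * t^(M-v) = (s+t)^M := by
  rw [add_pow]
  apply Finset.sum_congr rfl
  intro v _
  ring

lemma sumKQ (N y : ℕ) (a b u w : ℝ) (hy : y ≤ N) (K : ℕ → ℕ → ℝ)
    (hK : ∀ x y, K x y = ∑ z ∈ Finset.range (min x y + 1),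
      piK (x - z) (N - z) b * piK z y a) :
    ∑ x ∈ range (N+1), K x y * ((1+u*w)^x * (1+w)^(N-x))
      = (1 + (a*u + (1-a)*(b*u+(1-b)))*w)^y * (1 + (b*u+(1-b))*w)^(N-y) := by
  set A := b*u+(1-b) with hA
  have step1 : ∑ x ∈ range (N+1), K x y * ((1+u*w)^x * (1+w)^(N-x))
      = ∑ z ∈ range (y+1), piK z y a *
          ∑ v ∈ range (N-z+1), piK v (N-z) b * ((1+u*w)^(z+v) * (1+w)^(N-(z+v))) := by
    simp only [hK, Finset.sum_mul, Finset.mul_sum]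
    rw [Finset.sum_sigma' (range (N+1)) (fun x => range (min x y + 1))
      (fun x z => piK (x - z) (N - z) b * piK z y a * ((1+u*w)^x * (1+w)^(N-x))),
      Finset.sum_sigma' (range (y+1)) (fun z => range (N-z+1))
      (fun z v => piK z y a * (piK v (N-z) b * ((1+u*w)^(z+v) * (1+w)^(N-(z+v)))))]
    apply Finset.sum_nbij' (fun q => (⟨q.2, q.1 - q.2⟩ : (_ : ℕ) × ℕ))
      (fun q => (⟨q.1 + q.2, q.1⟩ : (_ : ℕ) × ℕ))
    · intro q hq
      simp only [Finset.mem_sigma, Finset.mem_range] at hq ⊢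
      omega
    · intro q hq
      simp only [Finset.mem_sigma, Finset.mem_range] at hq ⊢
      omega
    · intro q hq
      simp only [Finset.mem_sigma, Finset.mem_range] at hq
      have h0 : q.2 + (q.1 - q.2) = q.1 := by omega
      simp [h0]
    · intro q hq
      simp only [Finset.mem_sigma, Finset.mem_range] at hq
      simp
    · intro q hq
      simp only [Finset.mem_sigma, Finset.mem_range] at hq
      have h1 : q.2 + (q.1 - q.2) = q.1 := by omega
      rw [h1]
      ring
  rw [step1]
  have step2 : ∀ z ∈ range (y+1),
      piK z y a * ∑ v ∈ range (N-z+1), piK v (N-z) b * ((1+u*w)^(z+v) * (1+w)^(N-(z+v)))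
      = piK z y a * ((1+u*w)^z * (1+A*w)^(N-z)) := by
    intro z hz
    simp only [Finset.mem_range] at hz
    congr 1
    have h1 : ∀ v ∈ range (N-z+1),
        piK v (N-z) b * ((1+u*w)^(z+v) * (1+w)^(N-(z+v)))
        = (1+u*w)^z * (((N-z).choose v : ℝ) * (b*(1+u*w))^v * ((1-b)*(1+w))^((N-z)-v)) := by
      intro v hv
      simp only [Finset.mem_range] at hv
      have h2 : N - (z + v) = (N - z) - v := by omega
      rw [h2]
      unfold piK
      rw [pow_add, mul_pow, mul_pow]
      ring
    rw [Finset.sum_congr rfl h1, ← Finset.mul_sum, binom_sum]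
    congr 1
    rw [hA]
    ring
  rw [Finset.sum_congr rfl step2]
  have step3 : ∀ z ∈ range (y+1),
      piK z y a * ((1+u*w)^z * (1+A*w)^(N-z))
      = ((y.choose z : ℝ) * (a*(1+u*w))^z * ((1-a)*(1+A*w))^(y-z)) * (1+A*w)^(N-y) := by
    intro z hz
    simp only [Finset.mem_range] at hz
    have h2 : N - z = (y - z) + (N - y) := by omega
    rw [h2, pow_add]
    unfold piK
    rw [mul_pow, mul_pow]
    ring
  rw [Finset.sum_congr rfl step3, ← Finset.sum_mul, binom_sum]
  congr 2
  ring

lemma coeff_one_add_CX_pow (r : ℝ) (s k : ℕ) :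
    (((1 : ℝ[X]) + C r * X)^s).coeff k = (s.choose k : ℝ) * r ^ k := by
  rw [add_comm, add_pow]
  simp only [one_pow, mul_one, mul_pow, ← C_pow, finset_sum_coeff, coeff_mul_natCast,
    coeff_C_mul, coeff_X_pow, mul_ite, mul_one, mul_zero, ite_mul, zero_mul]
  rw [Finset.sum_ite_eq (range (s+1)) k]
  rcases le_or_gt k s with h | h
  · simp [Nat.lt_succ_of_le h, mul_comm]
  · simp [Nat.lt_succ, not_le.2 h, Nat.choose_eq_zero_of_lt h]

lemma coeffMul (r t : ℝ) (s m n : ℕ) :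
    (((1:ℝ[X]) + C r * X)^s * ((1:ℝ[X]) + C t * X)^m).coeff n
    = ∑ k ∈ range (n+1), (s.choose k : ℝ) * r^k * ((m.choose (n-k) : ℝ) * t^(n-k)) := by
  rw [coeff_mul, Finset.Nat.sum_antidiagonal_eq_sum_range_succ_mk]
  simp [coeff_one_add_CX_pow]

lemma keyStep (N y n : ℕ) (K : ℕ → ℕ → ℝ) (u c1 c2 : ℝ)
    (heval : ∀ w : ℝ, ∑ x ∈ range (N+1), K x y * ((1+u*w)^x * (1+w)^(N-x))
      = (1 + c1*w)^y * (1 + c2*w)^(N-y)) :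
    ∑ x ∈ range (N+1), K x y *
        (∑ k ∈ range (n+1), (x.choose k : ℝ) * u^k * (((N-x).choose (n-k) : ℝ) * 1^(n-k)))
      = ∑ k ∈ range (n+1), (y.choose k : ℝ) * c1^k * (((N-y).choose (n-k) : ℝ) * c2^(n-k)) := by
  have polyEq : (∑ x ∈ range (N+1), C (K x y) *
        (((1:ℝ[X]) + C u * X)^x * ((1:ℝ[X]) + C (1:ℝ) * X)^(N-x)))
      = ((1:ℝ[X]) + C c1 * X)^y * ((1:ℝ[X]) + C c2 * X)^(N-y) := by
    apply Polynomial.funext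
    intro w
    simp only [eval_finset_sum, eval_mul, eval_add, eval_pow, eval_one, eval_C, eval_X, one_mul]
    exact heval w
  have coeffEq := congrArg (fun q => Polynomial.coeff q n) polyEq
  simp only [finset_sum_coeff, coeff_C_mul, coeffMul] at coeffEq
  exact coeffEq

end Aux

theorem krawtchouk_type_i_left_eigenvectors (N : ℕ) (a b : ℝ)
    (ha : 0 < a) (ha1 : a < 1) (hb : 0 < b) (hb1 : b < 1)
    (p : ℝ) (hp : p = b / (1 - a + a * b))
    (K : ℕ → ℕ → ℝ)
    (hK : ∀ x y, K x y =
      ∑ z ∈ Finset.range (min x y + 1), piK (x - z) (N - z) b * piK z y a) :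
    ∀ n ≤ N, ∀ y ≤ N,
      ∑ x ∈ Finset.range (N + 1), K x y * kraw N p n x
        = a ^ n * (1 - b) ^ n * kraw N p n y := by
  intro n hn y hy
  have hd : (0:ℝ) < 1 - a + a * b := by nlinarith
  have hpne : p ≠ 0 := by
    rw [hp]
    positivity
  set u : ℝ := 1 - 1/p with hu
  have hA : b*u + (1-b) = a*(1-b) := by
    rw [hu, hp]
    field_simp
    ring
  have hB : a*u + (1-a)*(b*u+(1-b)) = a*(1-b)*u := by
    rw [hA, hu, hp]
    field_simp
    ring
  have heval : ∀ w : ℝ, ∑ x ∈ range (N+1), K x y * ((1+u*w)^x * (1+w)^(N-x))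
      = (1 + (a*(1-b)*u)*w)^y * (1 + (a*(1-b))*w)^(N-y) := by
    intro w
    rw [← hB, ← hA]
    exact sumKQ N y a b u w hy K hK
  have hCN : (N.choose n : ℝ) ≠ 0 := Nat.cast_ne_zero.2 (Nat.choose_pos hn).ne'
  apply mul_left_cancel₀ hCN
  calc (N.choose n : ℝ) * ∑ x ∈ range (N+1), K x y * kraw N p n x
      = ∑ x ∈ range (N+1), K x y * ((N.choose n : ℝ) * kraw N p n x) := by
        rw [Finset.mul_sum]
        apply Finset.sum_congr rfl
        intro x _
        ring
    _ = ∑ x ∈ range (N+1), K x y *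
          (∑ k ∈ range (n+1), (x.choose k : ℝ) * u^k * (((N-x).choose (n-k) : ℝ) * 1^(n-k))) := by
        apply Finset.sum_congr rfl
        intro x hx
        simp only [Finset.mem_range] at hx
        rw [krawAlt N n x p hn (by omega)]
        congr 1
        apply Finset.sum_congr rfl
        intro k _
        rw [hu]
        simp only [one_pow, mul_one]
        ring
    _ = ∑ k ∈ range (n+1), (y.choose k : ℝ) * (a*(1-b)*u)^k
          * (((N-y).choose (n-k) : ℝ) * (a*(1-b))^(n-k)) :=
        keyStep N y n K u (a*(1-b)*u) (a*(1-b)) heval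
    _ = a^n * (1-b)^n * ∑ k ∈ range (n+1),
          (y.choose k : ℝ) * ((N-y).choose (n-k) : ℝ) * (1 - 1/p)^k := by
        rw [Finset.mul_sum]
        apply Finset.sum_congr rfl
        intro k hk
        simp only [Finset.mem_range] at hk
        have e : k + (n - k) = n := by omega
        calc (y.choose k : ℝ) * (a*(1-b)*u)^k * (((N-y).choose (n-k) : ℝ) * (a*(1-b))^(n-k))
            = (a^(k+(n-k)) * (1-b)^(k+(n-k)))
              * ((y.choose k : ℝ) * ((N-y).choose (n-k) : ℝ) * u^k) := by
              rw [pow_add, pow_add]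
              rw [mul_pow, mul_pow, mul_pow]
              ring
          _ = a^n * (1-b)^n * ((y.choose k : ℝ) * ((N-y).choose (n-k) : ℝ) * (1-1/p)^k) := by
              rw [e, hu]
          _ = _ := by ring
    _ = a^n * (1-b)^n * ((N.choose n : ℝ) * kraw N p n y) := by
        rw [krawAlt N n y p hn hy]
    _ = (N.choose n : ℝ) * (a^n * (1-b)^n * kraw N p n y) := by ring
end

section
/- For the type (ii) Krawtchouk convolution K(x,y) = ∑_{z=max(0,x+y−N)}^{min(x,y)} π_K(x−z,N−y,b) π_K(z,y,a) with p = b/(1−a+b), one has ∑_{x=0}^{N} K(x,y) P_n(x,p) = (a−b)ⁿ P_n(y,p) for all n, y ∈ {0,...,N}. -/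
open Finset

/-! ### Auxiliary lemmas -/

lemma prod_shift_zero {m k : ℕ} (h : m < k) :
    ∏ j ∈ Finset.range k, (-(m : ℝ) + j) = 0 :=
  Finset.prod_eq_zero (Finset.mem_range.2 h) (by simp)

lemma prod_shift_eq {m : ℕ} : ∀ {k : ℕ}, k ≤ m →
    ∏ j ∈ Finset.range k, (-(m : ℝ) + j) = (-1) ^ k * (m.descFactorial k : ℝ) := by
  intro k
  induction k with
  | zero => simp
  | succ k ih =>
    intro hk
    rw [Finset.prod_range_succ, ih (by omega), Nat.descFactorial_succ]
    have h : ((m - k : ℕ) : ℝ) = (m : ℝ) - k := by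
      rw [Nat.cast_sub (by omega)]
    push_cast [h]
    ring

/-- `kraw` written with binomial coefficients over the full range. -/
lemma kraw_eq_choose (N : ℕ) (p : ℝ) {n x : ℕ} (hn : n ≤ N) (hx : x ≤ N) :
    kraw N p n x = ∑ k ∈ Finset.range (N + 1),
      (n.choose k : ℝ) * (x.choose k : ℝ) / (N.choose k : ℝ) * (-(1 / p)) ^ k := by
  rw [kraw, Finset.sum_subset (Finset.range_subset_range.2 (by omega : min n x + 1 ≤ N + 1))
      (fun k hk hk' => ?_)]
  · apply Finset.sum_congr rfl
    intro k hk
    rw [Finset.mem_range] at hk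
    rcases le_or_gt k n with hkn | hkn
    · rcases le_or_gt k x with hkx | hkx
      · -- main case : k ≤ n, k ≤ x, k ≤ N
        have hkN : k ≤ N := hkn.trans hn
        rw [prod_shift_eq hkn, prod_shift_eq hkx, prod_shift_eq hkN,
          Nat.descFactorial_eq_factorial_mul_choose, Nat.descFactorial_eq_factorial_mul_choose,
          Nat.descFactorial_eq_factorial_mul_choose]
        have hCN : ((N.choose k : ℕ) : ℝ) ≠ 0 := Nat.cast_ne_zero.2 (Nat.choose_pos hkN).ne'
        have hF : ((k.factorial : ℕ) : ℝ) ≠ 0 := Nat.cast_ne_zero.2 k.factorial_ne_zero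
        have hne : ((-1 : ℝ)) ^ k ≠ 0 := pow_ne_zero _ (by norm_num)
        rw [neg_pow (1 / p)]
        push_cast
        rw [div_mul_eq_mul_div, div_mul_eq_mul_div,
          div_eq_div_iff (mul_ne_zero (mul_ne_zero hne (mul_ne_zero hF hCN)) hF) hCN]
        ring
      · -- k > x : both sides vanish
        rw [prod_shift_zero hkx, Nat.choose_eq_zero_of_lt hkx]
        simp
    · -- k > n : both sides vanish
      rw [prod_shift_zero hkn, Nat.choose_eq_zero_of_lt hkn]
      simp
  · -- terms of kraw outside `range (min n x + 1)` vanish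
    rw [Finset.mem_range] at hk hk'
    have h : n < k ∨ x < k := by omega
    rcases h with h | h
    · rw [prod_shift_zero h]; simp
    · rw [prod_shift_zero h]; simp

/-- Vandermonde-type sum : `∑_n C(N,n) C(n,k) t^n = C(N,k) t^k (1+t)^(N-k)`. -/
lemma choose_sum_gen (N k : ℕ) (hk : k ≤ N) (t : ℝ) :
    ∑ n ∈ Finset.range (N + 1), (N.choose n : ℝ) * (n.choose k : ℝ) * t ^ n
      = (N.choose k : ℝ) * t ^ k * (1 + t) ^ (N - k) := by
  have hsub : Finset.Ico k (N + 1) ⊆ Finset.range (N + 1) := by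
    intro m hm
    rw [Finset.mem_Ico] at hm
    exact Finset.mem_range.2 hm.2
  rw [← Finset.sum_subset hsub (fun m hm hm' => ?_)]
  · rw [Finset.sum_Ico_eq_sum_range]
    have hNk : N + 1 - k = N - k + 1 := by omega
    rw [hNk]
    have hbin : (1 + t) ^ (N - k) = ∑ m ∈ Finset.range (N - k + 1),
        t ^ m * 1 ^ (N - k - m) * ((N - k).choose m : ℝ) := by
      rw [← add_pow t 1 (N - k)]
      ring_nf
    rw [hbin, Finset.mul_sum]
    apply Finset.sum_congr rfl
    intro m hm
    rw [Finset.mem_range] at hm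
    have hmk : k + m ≤ N := by omega
    have hcm : (N.choose (k + m) : ℝ) * ((k + m).choose k : ℝ)
        = (N.choose k : ℝ) * ((N - k).choose m : ℝ) := by
      have := Nat.choose_mul (n := N) (Nat.le_add_right k m)
      have h2 : k + m - k = m := by omega
      rw [h2] at this
      exact_mod_cast congrArg (Nat.cast (R := ℝ)) this
    calc (N.choose (k + m) : ℝ) * ((k + m).choose k : ℝ) * t ^ (k + m)
        = ((N.choose (k + m) : ℝ) * ((k + m).choose k : ℝ)) * t ^ (k + m) := by ring
      _ = ((N.choose k : ℝ) * ((N - k).choose m : ℝ)) * t ^ (k + m) := by rw [hcm]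
      _ = (N.choose k : ℝ) * t ^ k * (t ^ m * 1 ^ (N - k - m) * ((N - k).choose m : ℝ)) := by
          rw [pow_add]; ring
  · rw [Finset.mem_range] at hm
    rw [Finset.mem_Ico] at hm'
    have : m < k := by omega
    rw [Nat.choose_eq_zero_of_lt this]
    simp

/-- Generating function for Krawtchouk polynomials. -/
lemma kraw_gen (N : ℕ) (p : ℝ) {x : ℕ} (hx : x ≤ N) (t : ℝ) :
    ∑ n ∈ Finset.range (N + 1), (N.choose n : ℝ) * kraw N p n x * t ^ n
      = (1 + t - t * (1 / p)) ^ x * (1 + t) ^ (N - x) := by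
  calc ∑ n ∈ Finset.range (N + 1), (N.choose n : ℝ) * kraw N p n x * t ^ n
      = ∑ n ∈ Finset.range (N + 1), ∑ k ∈ Finset.range (N + 1),
          ((x.choose k : ℝ) / (N.choose k : ℝ) * (-(1 / p)) ^ k) *
            ((N.choose n : ℝ) * (n.choose k : ℝ) * t ^ n) := by
        apply Finset.sum_congr rfl
        intro n hn
        rw [Finset.mem_range] at hn
        rw [kraw_eq_choose N p (by omega) hx, Finset.mul_sum, Finset.sum_mul]
        apply Finset.sum_congr rfl
        intro k hk
        ring
    _ = ∑ k ∈ Finset.range (N + 1),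
          ((x.choose k : ℝ) / (N.choose k : ℝ) * (-(1 / p)) ^ k) *
            ((N.choose k : ℝ) * t ^ k * (1 + t) ^ (N - k)) := by
        rw [Finset.sum_comm]
        apply Finset.sum_congr rfl
        intro k hk
        rw [Finset.mem_range] at hk
        rw [← Finset.mul_sum, choose_sum_gen N k (by omega) t]
    _ = ∑ k ∈ Finset.range (N + 1),
          (x.choose k : ℝ) * (-(t * (1 / p))) ^ k * (1 + t) ^ (N - k) := by
        apply Finset.sum_congr rfl
        intro k hk
        rw [Finset.mem_range] at hk
        have hCN : ((N.choose k : ℕ) : ℝ) ≠ 0 :=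
          Nat.cast_ne_zero.2 (Nat.choose_pos (by omega : k ≤ N)).ne'
        rw [div_mul_eq_mul_div, div_mul_eq_mul_div, div_eq_iff hCN,
          neg_pow (1 / p), neg_pow (t * (1 / p)), mul_pow]
        ring
    _ = ∑ k ∈ Finset.range (x + 1),
          (x.choose k : ℝ) * (-(t * (1 / p))) ^ k * (1 + t) ^ (N - k) := by
        rw [← Finset.sum_subset (Finset.range_subset_range.2 (by omega : x + 1 ≤ N + 1))
          (fun k hk hk' => ?_)]
        rw [Finset.mem_range] at hk hk'
        rw [Nat.choose_eq_zero_of_lt (by omega : x < k)]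
        simp
    _ = (1 + t) ^ (N - x) * ∑ k ∈ Finset.range (x + 1),
          (-(t * (1 / p))) ^ k * (1 + t) ^ (x - k) * ((x.choose k : ℝ)) := by
        rw [Finset.mul_sum]
        apply Finset.sum_congr rfl
        intro k hk
        rw [Finset.mem_range] at hk
        have : N - k = (x - k) + (N - x) := by omega
        rw [this, pow_add]
        ring
    _ = (1 + t) ^ (N - x) * (-(t * (1 / p)) + (1 + t)) ^ x := by
        rw [add_pow (-(t * (1 / p))) (1 + t) x]
    _ = (1 + t - t * (1 / p)) ^ x * (1 + t) ^ (N - x) := by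
        rw [show -(t * (1 / p)) + (1 + t) = 1 + t - t * (1 / p) by ring]
        ring

/-- Generating function of the binomial distribution. -/
lemma piK_gen (M : ℕ) (q u v : ℝ) :
    ∑ w ∈ Finset.range (M + 1), piK w M q * u ^ w * v ^ (M - w)
      = (q * u + (1 - q) * v) ^ M := by
  rw [add_pow]
  apply Finset.sum_congr rfl
  intro w hw
  rw [piK, mul_pow, mul_pow]
  ring

/-- Reindexing the convolution double sum. -/
lemma reindex_conv (N y : ℕ) (hy : y ≤ N) (f : ℕ → ℕ → ℝ) :
    ∑ x ∈ Finset.range (N + 1), ∑ z ∈ Finset.Icc (x + y - N) (min x y), f z (x - z)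
      = ∑ z ∈ Finset.range (y + 1), ∑ w ∈ Finset.range (N - y + 1), f z w := by
  rw [Finset.sum_sigma', Finset.sum_sigma']
  refine Finset.sum_nbij' (fun q => (⟨q.2, q.1 - q.2⟩ : Σ _ : ℕ, ℕ))
    (fun q => (⟨q.1 + q.2, q.1⟩ : Σ _ : ℕ, ℕ)) ?_ ?_ ?_ ?_ ?_
  · rintro ⟨x, z⟩ hq
    simp only [Finset.mem_sigma, Finset.mem_range, Finset.mem_Icc, le_min_iff] at hq ⊢
    omega
  · rintro ⟨z, w⟩ hq
    simp only [Finset.mem_sigma, Finset.mem_range, Finset.mem_Icc, le_min_iff] at hq ⊢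
    omega
  · rintro ⟨x, z⟩ hq
    simp only [Finset.mem_sigma, Finset.mem_range, Finset.mem_Icc, le_min_iff] at hq
    simp only [Sigma.mk.inj_iff, heq_eq_eq]
    exact ⟨by omega, trivial⟩
  · rintro ⟨z, w⟩ hq
    simp only [Finset.mem_sigma, Finset.mem_range, Finset.mem_Icc, le_min_iff] at hq
    simp only [Sigma.mk.inj_iff, heq_eq_eq]
    exact ⟨trivial, by omega⟩
  · rintro ⟨x, z⟩ hq
    rfl

/-- Coefficient extraction from equality of polynomial functions. -/
lemma coeff_extract {M : ℕ} (c d : ℕ → ℝ)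
    (h : ∀ t : ℝ, ∑ m ∈ Finset.range M, c m * t ^ m = ∑ m ∈ Finset.range M, d m * t ^ m)
    {n : ℕ} (hn : n < M) : c n = d n := by
  have hpoly : (∑ m ∈ Finset.range M, Polynomial.C (c m) * Polynomial.X ^ m)
      = ∑ m ∈ Finset.range M, Polynomial.C (d m) * Polynomial.X ^ m := by
    apply Polynomial.funext
    intro r
    simpa [Polynomial.eval_finset_sum] using h r
  have := congrArg (fun q => Polynomial.coeff q n) hpoly
  simpa [Polynomial.finset_sum_coeff, Polynomial.coeff_C_mul, Polynomial.coeff_X_pow,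
    Finset.sum_ite_eq, Finset.mem_range, hn] using this

theorem krawtchouk_type_ii_left_eigenvectors (N : ℕ) (a b : ℝ)
    (ha : 0 < a) (ha1 : a < 1) (hb : 0 < b) (hb1 : b < 1)
    (p : ℝ) (hp : p = b / (1 - a + b))
    (K : ℕ → ℕ → ℝ)
    (hK : ∀ x y, K x y =
      ∑ z ∈ Finset.Icc (x + y - N) (min x y), piK (x - z) (N - y) b * piK z y a) :
    ∀ n ≤ N, ∀ y ≤ N,
      ∑ x ∈ Finset.range (N + 1), K x y * kraw N p n x
        = (a - b) ^ n * kraw N p n y := by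
  intro n hn y hy
  have hb' : b ≠ 0 := ne_of_gt hb
  have hab : (1 : ℝ) - a + b ≠ 0 := by nlinarith
  -- the key generating-function identity
  have key : ∀ t : ℝ,
      ∑ m ∈ Finset.range (N + 1),
        ((N.choose m : ℝ) * (∑ x ∈ Finset.range (N + 1), K x y * kraw N p m x)) * t ^ m
      = ∑ m ∈ Finset.range (N + 1),
        ((N.choose m : ℝ) * ((a - b) ^ m * kraw N p m y)) * t ^ m := by
    intro t
    have lhs1 : ∑ m ∈ Finset.range (N + 1),
        ((N.choose m : ℝ) * (∑ x ∈ Finset.range (N + 1), K x y * kraw N p m x)) * t ^ m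
        = ∑ x ∈ Finset.range (N + 1),
            K x y * ((1 + t - t * (1 / p)) ^ x * (1 + t) ^ (N - x)) := by
      have hsw : ∀ m ∈ Finset.range (N + 1),
          ((N.choose m : ℝ) * (∑ x ∈ Finset.range (N + 1), K x y * kraw N p m x)) * t ^ m
          = ∑ x ∈ Finset.range (N + 1), K x y * ((N.choose m : ℝ) * kraw N p m x * t ^ m) := by
        intro m hm
        rw [Finset.mul_sum, Finset.sum_mul]
        apply Finset.sum_congr rfl
        intro x hx
        ring
      rw [Finset.sum_congr rfl hsw, Finset.sum_comm]
      apply Finset.sum_congr rfl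
      intro x hx
      rw [Finset.mem_range] at hx
      rw [← Finset.mul_sum, kraw_gen N p (by omega : x ≤ N) t]
    have lhs2 : ∑ x ∈ Finset.range (N + 1),
          K x y * ((1 + t - t * (1 / p)) ^ x * (1 + t) ^ (N - x))
        = (a * (1 + t - t * (1 / p)) + (1 - a) * (1 + t)) ^ y *
            (b * (1 + t - t * (1 / p)) + (1 - b) * (1 + t)) ^ (N - y) := by
      set A := 1 + t - t * (1 / p) with hA
      set B := 1 + t with hB
      calc ∑ x ∈ Finset.range (N + 1), K x y * (A ^ x * B ^ (N - x))
          = ∑ x ∈ Finset.range (N + 1), ∑ z ∈ Finset.Icc (x + y - N) (min x y),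
              piK (x - z) (N - y) b * piK z y a *
                (A ^ (z + (x - z)) * B ^ (N - (z + (x - z)))) := by
            apply Finset.sum_congr rfl
            intro x hx
            rw [Finset.mem_range] at hx
            rw [hK, Finset.sum_mul]
            apply Finset.sum_congr rfl
            intro z hz
            rw [Finset.mem_Icc, le_min_iff] at hz
            have hzx : z + (x - z) = x := by omega
            rw [hzx]
        _ = ∑ z ∈ Finset.range (y + 1), ∑ w ∈ Finset.range (N - y + 1),
              piK w (N - y) b * piK z y a * (A ^ (z + w) * B ^ (N - (z + w))) :=
            reindex_conv N y hy
              (fun z w => piK w (N - y) b * piK z y a * (A ^ (z + w) * B ^ (N - (z + w))))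
        _ = (∑ z ∈ Finset.range (y + 1), piK z y a * A ^ z * B ^ (y - z)) *
            (∑ w ∈ Finset.range (N - y + 1), piK w (N - y) b * A ^ w * B ^ (N - y - w)) := by
            rw [Finset.sum_mul_sum]
            apply Finset.sum_congr rfl
            intro z hz
            apply Finset.sum_congr rfl
            intro w hw
            rw [Finset.mem_range] at hz hw
            have hE : N - (z + w) = (y - z) + (N - y - w) := by omega
            rw [hE, pow_add, pow_add]
            ring
        _ = (a * A + (1 - a) * B) ^ y * (b * A + (1 - b) * B) ^ (N - y) := by
            rw [piK_gen, piK_gen]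
    have rhs1 : ∑ m ∈ Finset.range (N + 1),
          ((N.choose m : ℝ) * ((a - b) ^ m * kraw N p m y)) * t ^ m
        = (1 + (a - b) * t - (a - b) * t * (1 / p)) ^ y * (1 + (a - b) * t) ^ (N - y) := by
      rw [← kraw_gen N p hy ((a - b) * t)]
      apply Finset.sum_congr rfl
      intro m hm
      rw [mul_pow]
      ring
    have e1 : a * (1 + t - t * (1 / p)) + (1 - a) * (1 + t)
        = 1 + (a - b) * t - (a - b) * t * (1 / p) := by
      subst hp
      rw [one_div_div]
      field_simp [hb']
      ring
    have e2 : b * (1 + t - t * (1 / p)) + (1 - b) * (1 + t) = 1 + (a - b) * t := by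
      subst hp
      rw [one_div_div]
      field_simp [hb']
      ring
    rw [lhs1, lhs2, e1, e2, rhs1]
  have hcd := coeff_extract
    (fun m => (N.choose m : ℝ) * (∑ x ∈ Finset.range (N + 1), K x y * kraw N p m x))
    (fun m => (N.choose m : ℝ) * ((a - b) ^ m * kraw N p m y)) key (by omega : n < N + 1)
  have hCn : ((N.choose n : ℕ) : ℝ) ≠ 0 := Nat.cast_ne_zero.2 (Nat.choose_pos hn).ne'
  exact mul_left_cancel₀ hCn hcd
end

section
/- The Charlier polynomials P_n(x,a) = ₂F₀(−n,−x;−|−1/a) = ∑_{k=0}^{min(n,x)} (−n)_k(−x)_k (−1/a)^k / k! satisfy the orthogonality relation ∑_{x=0}^{∞} (a^x e^{−a}/x!) P_m(x,a) P_n(x,a) = δ_{mn} n!/aⁿ. -/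
open Finset

/-- Charlier polynomial `P_n(x,a) = ₂F₀(-n,-x;- | -1/a)` as a terminating sum. -/
noncomputable def charlier (a : ℝ) (n x : ℕ) : ℝ :=
  ∑ k ∈ Finset.range (min n x + 1),
    (∏ j ∈ Finset.range k, (-(n : ℝ) + j)) * (∏ j ∈ Finset.range k, (-(x : ℝ) + j)) *
      (-1 / a) ^ k / (Nat.factorial k)

lemma prod_range_neg_add (n k : ℕ) :
    (∏ j ∈ Finset.range k, (-(n : ℝ) + j)) = (-1)^k * (n.descFactorial k : ℝ) := by
  induction k with
  | zero => simp
  | succ k ih =>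
    rw [Finset.prod_range_succ, ih, Nat.descFactorial_succ]
    rcases le_or_gt k n with h | h
    · push_cast [h]
      ring
    · have h0 : n.descFactorial k = 0 := Nat.descFactorial_eq_zero_iff_lt.2 h
      simp [h0]

lemma charlier_eq (a : ℝ) (n x : ℕ) :
    charlier a n x = ∑ k ∈ Finset.range (n + 1),
      ((-1 : ℝ)^k * (Nat.factorial k) * (n.choose k) * (1/a)^k) * (x.choose k) := by
  unfold charlier
  have hstep : ∀ k : ℕ,
      (∏ j ∈ Finset.range k, (-(n : ℝ) + j)) * (∏ j ∈ Finset.range k, (-(x : ℝ) + j)) *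
        (-1 / a) ^ k / (Nat.factorial k)
      = ((-1 : ℝ)^k * (Nat.factorial k) * (n.choose k) * (1/a)^k) * (x.choose k) := by
    intro k
    rw [prod_range_neg_add, prod_range_neg_add, Nat.descFactorial_eq_factorial_mul_choose,
      Nat.descFactorial_eq_factorial_mul_choose]
    have hk : (Nat.factorial k : ℝ) ≠ 0 := by exact_mod_cast (Nat.factorial_pos k).ne'
    push_cast
    rw [neg_div, neg_pow (1/a)]
    have h1 : ((-1:ℝ))^k * (-1)^k = 1 := by rw [← mul_pow]; norm_num
    have h2 : (Nat.factorial k : ℝ)/(Nat.factorial k) = 1 := div_self hk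
    calc ((-1:ℝ)) ^ k * (↑(Nat.factorial k) * ↑(n.choose k)) *
            ((-1) ^ k * (↑(Nat.factorial k) * ↑(x.choose k))) * ((-1)^k * (1/a)^k) /
            ↑(Nat.factorial k)
        = (((-1:ℝ))^k * (-1)^k) * ((Nat.factorial k : ℝ)/(Nat.factorial k)) *
            ((-1)^k * (Nat.factorial k) * (n.choose k) * (1/a)^k * (x.choose k)) := by ring
      _ = (-1:ℝ)^k * ↑(Nat.factorial k) * ↑(n.choose k) * (1 / a) ^ k * ↑(x.choose k) := by
          rw [h1, h2, div_pow, one_pow]; ring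
  rw [Finset.sum_congr rfl (fun k _ => hstep k)]
  apply Finset.sum_subset
  · exact Finset.range_subset_range.2 (by omega)
  · intro k hk hk'
    simp only [Finset.mem_range] at hk hk'
    have hx : x < k := by
      by_contra hxk
      push_neg at hxk
      omega
    simp [Nat.choose_eq_zero_of_lt hx]

lemma exp_tsum' (a : ℝ) : ∑' u : ℕ, a ^ u / (Nat.factorial u) = Real.exp a := by
  rw [Real.exp_eq_exp_ℝ, NormedSpace.exp_eq_tsum_div]

lemma h_shift (a : ℝ) (r u : ℕ) :
    a ^ (u + r) / (Nat.factorial (u + r)) * (((u + r).choose r : ℕ) : ℝ)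
      = a ^ r / (Nat.factorial r) * (a ^ u / (Nat.factorial u)) := by
  have hc : (((u + r).choose r : ℕ) : ℝ) * (Nat.factorial r) * (Nat.factorial u)
      = (Nat.factorial (u + r)) := by
    have := Nat.choose_mul_factorial_mul_factorial (Nat.le_add_left r u)
    rw [Nat.add_sub_cancel] at this
    exact_mod_cast this
  have h1 : (Nat.factorial (u+r) : ℝ) ≠ 0 := by exact_mod_cast (Nat.factorial_pos _).ne'
  have h2 : (Nat.factorial r : ℝ) ≠ 0 := by exact_mod_cast (Nat.factorial_pos _).ne'
  have h3 : (Nat.factorial u : ℝ) ≠ 0 := by exact_mod_cast (Nat.factorial_pos _).ne'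
  field_simp
  rw [pow_add]
  linear_combination (a ^ u * a ^ r) * hc

lemma summable_h (a : ℝ) (r : ℕ) :
    Summable (fun t : ℕ => a ^ t / (Nat.factorial t) * (t.choose r : ℝ)) := by
  refine (summable_nat_add_iff r).1 ?_
  exact ((Real.summable_pow_div_factorial a).mul_left
    (a ^ r / (Nat.factorial r))).congr (fun u => (h_shift a r u).symm)

lemma tsum_h (a : ℝ) (r : ℕ) :
    ∑' t : ℕ, a ^ t / (Nat.factorial t) * (t.choose r : ℝ)
      = a ^ r / (Nat.factorial r) * Real.exp a := by
  rw [← Summable.sum_add_tsum_nat_add r (summable_h a r)]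
  have hz : ∑ i ∈ Finset.range r, a ^ i / (Nat.factorial i) * (i.choose r : ℝ) = 0 := by
    apply Finset.sum_eq_zero
    intro i hi
    rw [Nat.choose_eq_zero_of_lt (Finset.mem_range.1 hi)]
    simp
  rw [hz, zero_add]
  calc ∑' u : ℕ, a ^ (u + r) / (Nat.factorial (u + r)) * (((u + r).choose r : ℕ) : ℝ)
      = ∑' u : ℕ, a ^ r / (Nat.factorial r) * (a ^ u / (Nat.factorial u)) :=
        tsum_congr (fun u => h_shift a r u)
    _ = a ^ r / (Nat.factorial r) * Real.exp a := by
        rw [tsum_mul_left, exp_tsum']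

/-- `g j r x = a^x/x! * C(x,j) * C(x-j,r)` -/
noncomputable def gfun (a : ℝ) (j r : ℕ) : ℕ → ℝ :=
  fun x => a ^ x / (Nat.factorial x) * (x.choose j : ℝ) * ((x - j).choose r : ℝ)

lemma g_shift (a : ℝ) (j r t : ℕ) :
    gfun a j r (t + j) = a ^ j / (Nat.factorial j) *
      (a ^ t / (Nat.factorial t) * (t.choose r : ℝ)) := by
  unfold gfun
  rw [Nat.add_sub_cancel]
  calc a ^ (t + j) / (Nat.factorial (t + j)) * ((t + j).choose j : ℝ) * (t.choose r : ℝ)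
      = a ^ j / (Nat.factorial j) * (a ^ t / (Nat.factorial t)) * (t.choose r : ℝ) := by
        rw [h_shift a j t]
    _ = a ^ j / (Nat.factorial j) * (a ^ t / (Nat.factorial t) * (t.choose r : ℝ)) := by ring

lemma summable_g (a : ℝ) (j r : ℕ) : Summable (gfun a j r) := by
  refine (summable_nat_add_iff j).1 ?_
  exact ((summable_h a r).mul_left (a ^ j / (Nat.factorial j))).congr
    (fun t => (g_shift a j r t).symm)

lemma tsum_g (a : ℝ) (j r : ℕ) :
    ∑' x : ℕ, gfun a j r x = a ^ j / (Nat.factorial j) *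
      (a ^ r / (Nat.factorial r) * Real.exp a) := by
  rw [← Summable.sum_add_tsum_nat_add j (summable_g a j r)]
  have hz : ∑ i ∈ Finset.range j, gfun a j r i = 0 := by
    apply Finset.sum_eq_zero
    intro i hi
    unfold gfun
    rw [Nat.choose_eq_zero_of_lt (Finset.mem_range.1 hi)]
    simp
  rw [hz, zero_add]
  calc ∑' t : ℕ, gfun a j r (t + j)
      = ∑' t : ℕ, a ^ j / (Nat.factorial j) *
          (a ^ t / (Nat.factorial t) * (t.choose r : ℝ)) := tsum_congr (g_shift a j r)
    _ = _ := by rw [tsum_mul_left, tsum_h]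

lemma alt_sum (M s : ℕ) :
    ∑ j ∈ Finset.range (M + 1), (-1 : ℝ)^j * (M.choose j) * (j.choose s)
      = if s = M then (-1 : ℝ)^M else 0 := by
  rcases le_or_gt s M with hsM | hsM
  · have key : ∀ N : ℕ, ∑ i ∈ Finset.range (N + 1), (-1 : ℝ)^i * (N.choose i)
        = if N = 0 then 1 else 0 := by
      intro N
      have h := Int.alternating_sum_range_choose (n := N)
      have h2 := congrArg (Int.cast : ℤ → ℝ) h
      push_cast at h2
      simpa using h2
    rw [Finset.range_eq_Ico, ← Finset.sum_Ico_consecutive _ (Nat.zero_le s)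
      (by omega : s ≤ M + 1)]
    have hz : ∑ j ∈ Finset.Ico 0 s, (-1 : ℝ)^j * (M.choose j) * (j.choose s) = 0 := by
      apply Finset.sum_eq_zero
      intro j hj
      rw [Nat.choose_eq_zero_of_lt (Finset.mem_Ico.1 hj).2]
      simp
    rw [hz, zero_add, Finset.sum_Ico_eq_sum_range]
    have hr : M + 1 - s = (M - s) + 1 := by omega
    rw [hr]
    have hterm : ∀ i ∈ Finset.range ((M - s) + 1),
        (-1 : ℝ)^(s + i) * (M.choose (s + i)) * ((s + i).choose s)
          = ((-1 : ℝ)^s * (M.choose s)) * ((-1 : ℝ)^i * ((M - s).choose i)) := by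
      intro i hi
      have hi' : i ≤ M - s := by simpa using Nat.lt_succ_iff.1 (Finset.mem_range.1 hi)
      have hc := Nat.choose_mul (n := M) (Nat.le_add_right s i)
      rw [Nat.add_sub_cancel_left] at hc
      have hc' : ((M.choose (s + i) * (s + i).choose s : ℕ) : ℝ)
          = ((M.choose s * (M - s).choose i : ℕ) : ℝ) := by exact_mod_cast congrArg (Nat.cast : ℕ → ℝ) hc
      push_cast at hc'
      rw [pow_add]
      calc (-1 : ℝ)^s * (-1 : ℝ)^i * (M.choose (s + i)) * ((s + i).choose s)
          = (-1 : ℝ)^s * (-1 : ℝ)^i * ((M.choose (s + i) : ℝ) * ((s + i).choose s)) := by ring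
        _ = (-1 : ℝ)^s * (-1 : ℝ)^i * ((M.choose s : ℝ) * ((M - s).choose i)) := by rw [hc']
        _ = ((-1 : ℝ)^s * (M.choose s)) * ((-1 : ℝ)^i * ((M - s).choose i)) := by ring
    rw [Finset.sum_congr rfl hterm, ← Finset.mul_sum, key (M - s)]
    by_cases h : s = M
    · subst h
      simp
    · have : M - s ≠ 0 := by omega
      simp [this, h]
  · rw [if_neg (by omega : ¬ s = M)]
    apply Finset.sum_eq_zero
    intro j hj
    have : j < s := by
      have := Finset.mem_range.1 hj
      omega
    rw [Nat.choose_eq_zero_of_lt this]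
    simp

lemma vdm (x j k : ℕ) : x.choose j * x.choose k
    = ∑ s ∈ Finset.range (k + 1), j.choose s * (x.choose j * (x - j).choose (k - s)) := by
  rcases le_or_gt j x with h | h
  · have hx : j + (x - j) = x := by omega
    have h2 : x.choose k = ∑ s ∈ Finset.range (k + 1), j.choose s * (x - j).choose (k - s) := by
      conv_lhs => rw [← hx]
      rw [Nat.add_choose_eq, Finset.Nat.sum_antidiagonal_eq_sum_range_succ_mk]
    rw [h2, Finset.mul_sum]
    exact Finset.sum_congr rfl fun s _ => by ring
  · simp [Nat.choose_eq_zero_of_lt h]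

theorem charlier_orthogonality (a : ℝ) (ha : 0 < a) (m n : ℕ) :
    ∑' x : ℕ, (a ^ x * Real.exp (-a) / (Nat.factorial x)) * charlier a m x * charlier a n x
      = if m = n then (Nat.factorial n : ℝ) / a ^ n else 0 := by
  have ha0 : a ≠ 0 := ha.ne'
  -- Pointwise expansion of the summand into a finite triple sum of `gfun` terms
  have PW : ∀ x : ℕ,
      (a ^ x * Real.exp (-a) / (Nat.factorial x)) * charlier a m x * charlier a n x
      = ∑ j ∈ Finset.range (m + 1), ∑ k ∈ Finset.range (n + 1), ∑ s ∈ Finset.range (k + 1),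
          (Real.exp (-a) * ((-1 : ℝ)^j * (Nat.factorial j) * (m.choose j) * (1/a)^j)
            * ((-1 : ℝ)^k * (Nat.factorial k) * (n.choose k) * (1/a)^k) * (j.choose s : ℝ))
            * gfun a j (k - s) x := by
    intro x
    rw [charlier_eq, charlier_eq, mul_assoc, Finset.sum_mul_sum, Finset.mul_sum]
    refine Finset.sum_congr rfl fun j _ => ?_
    rw [Finset.mul_sum]
    refine Finset.sum_congr rfl fun k _ => ?_
    have hv : ((x.choose j : ℝ)) * (x.choose k)
        = ∑ s ∈ Finset.range (k + 1),
            (j.choose s : ℝ) * ((x.choose j : ℝ) * ((x - j).choose (k - s) : ℝ)) := by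
      exact_mod_cast congrArg (Nat.cast : ℕ → ℝ) (vdm x j k)
    calc a ^ x * Real.exp (-a) / (Nat.factorial x) *
            ((((-1 : ℝ)^j * (Nat.factorial j) * (m.choose j) * (1/a)^j) * (x.choose j : ℝ)) *
            ((((-1 : ℝ)^k * (Nat.factorial k) * (n.choose k) * (1/a)^k)) * (x.choose k : ℝ)))
        = (Real.exp (-a) * ((-1 : ℝ)^j * (Nat.factorial j) * (m.choose j) * (1/a)^j)
            * ((-1 : ℝ)^k * (Nat.factorial k) * (n.choose k) * (1/a)^k))
            * (a ^ x / (Nat.factorial x) * ((x.choose j : ℝ) * (x.choose k : ℝ))) := by ring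
      _ = (Real.exp (-a) * ((-1 : ℝ)^j * (Nat.factorial j) * (m.choose j) * (1/a)^j)
            * ((-1 : ℝ)^k * (Nat.factorial k) * (n.choose k) * (1/a)^k))
            * (a ^ x / (Nat.factorial x) * ∑ s ∈ Finset.range (k + 1),
                (j.choose s : ℝ) * ((x.choose j : ℝ) * ((x - j).choose (k - s) : ℝ))) := by
          rw [hv]
      _ = _ := by
          rw [Finset.mul_sum, Finset.mul_sum]
          refine Finset.sum_congr rfl fun s _ => ?_
          unfold gfun
          ring
  have S3 : ∀ j k s : ℕ, Summable (fun x : ℕ =>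
      (Real.exp (-a) * ((-1 : ℝ)^j * (Nat.factorial j) * (m.choose j) * (1/a)^j)
        * ((-1 : ℝ)^k * (Nat.factorial k) * (n.choose k) * (1/a)^k) * (j.choose s : ℝ))
        * gfun a j (k - s) x) := fun j k s => (summable_g a j (k - s)).mul_left _
  -- Swap tsum and the finite sums
  rw [tsum_congr PW, Summable.tsum_finsetSum (fun j _ => summable_sum fun k _ => summable_sum fun s _ => S3 j k s)]
  have step2 : ∀ j ∈ Finset.range (m + 1),
      (∑' x : ℕ, ∑ k ∈ Finset.range (n + 1), ∑ s ∈ Finset.range (k + 1),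
        (Real.exp (-a) * ((-1 : ℝ)^j * (Nat.factorial j) * (m.choose j) * (1/a)^j)
          * ((-1 : ℝ)^k * (Nat.factorial k) * (n.choose k) * (1/a)^k) * (j.choose s : ℝ))
          * gfun a j (k - s) x)
      = ∑ k ∈ Finset.range (n + 1), ∑ s ∈ Finset.range (k + 1),
          (Real.exp (-a) * ((-1 : ℝ)^j * (Nat.factorial j) * (m.choose j) * (1/a)^j)
            * ((-1 : ℝ)^k * (Nat.factorial k) * (n.choose k) * (1/a)^k) * (j.choose s : ℝ))
            * (a ^ j / (Nat.factorial j) * (a ^ (k - s) / (Nat.factorial (k - s)) * Real.exp a)) := by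
    intro j _
    rw [Summable.tsum_finsetSum (fun k _ => summable_sum fun s _ => S3 j k s)]
    refine Finset.sum_congr rfl fun k _ => ?_
    rw [Summable.tsum_finsetSum (fun s _ => S3 j k s)]
    refine Finset.sum_congr rfl fun s _ => ?_
    rw [tsum_mul_left, tsum_g]
  rw [Finset.sum_congr rfl step2]
  -- Simplify each (j,k,s) term
  have hexp : Real.exp (-a) * Real.exp a = 1 := by
    rw [← Real.exp_add]; simp
  have hterm : ∀ j k : ℕ, ∀ s ∈ Finset.range (k + 1),
      (Real.exp (-a) * ((-1 : ℝ)^j * (Nat.factorial j) * (m.choose j) * (1/a)^j)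
        * ((-1 : ℝ)^k * (Nat.factorial k) * (n.choose k) * (1/a)^k) * (j.choose s : ℝ))
        * (a ^ j / (Nat.factorial j) * (a ^ (k - s) / (Nat.factorial (k - s)) * Real.exp a))
      = ((-1 : ℝ)^j * (m.choose j) * (j.choose s))
        * ((-1 : ℝ)^k * (Nat.factorial k) * (n.choose k) * (1/a)^s / (Nat.factorial (k - s))) := by
    intro j k s hs
    have hsk : s ≤ k := Nat.lt_succ_iff.1 (Finset.mem_range.1 hs)
    have hj : (Nat.factorial j : ℝ) ≠ 0 := by exact_mod_cast (Nat.factorial_pos j).ne'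
    have hja : (1/a)^j * a^j = 1 := by
      rw [one_div, inv_pow, inv_mul_cancel₀ (pow_ne_zero j ha0)]
    have hka : (1/a)^k * a^(k - s) = (1/a)^s := by
      calc (1/a)^k * a^(k - s) = (1/a)^((k - s) + s) * a^(k - s) := by
            rw [Nat.sub_add_cancel hsk]
        _ = ((1/a) * a)^(k - s) * (1/a)^s := by rw [pow_add, mul_pow]; ring
        _ = (1/a)^s := by rw [one_div, inv_mul_cancel₀ ha0, one_pow, one_mul]
    calc (Real.exp (-a) * ((-1 : ℝ)^j * (Nat.factorial j) * (m.choose j) * (1/a)^j)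
          * ((-1 : ℝ)^k * (Nat.factorial k) * (n.choose k) * (1/a)^k) * (j.choose s : ℝ))
          * (a ^ j / (Nat.factorial j) * (a ^ (k - s) / (Nat.factorial (k - s)) * Real.exp a))
        = (Real.exp (-a) * Real.exp a) * ((1/a)^j * a^j)
            * ((Nat.factorial j : ℝ) / (Nat.factorial j)) * ((1/a)^k * a^(k - s))
            * (((-1 : ℝ)^j * (m.choose j) * (j.choose s))
              * ((-1 : ℝ)^k * (Nat.factorial k) * (n.choose k) / (Nat.factorial (k - s)))) := by
          ring
      _ = ((-1 : ℝ)^j * (m.choose j) * (j.choose s))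
            * ((-1 : ℝ)^k * (Nat.factorial k) * (n.choose k) * (1/a)^s
              / (Nat.factorial (k - s))) := by
          rw [hexp, hja, div_self hj, hka]
          ring
  rw [Finset.sum_congr rfl (fun j _ => Finset.sum_congr rfl
      (fun k _ => Finset.sum_congr rfl (hterm j k)))]
  -- Reorder sums and apply the alternating-sum identities
  rw [Finset.sum_comm]
  have step3 : ∀ k ∈ Finset.range (n + 1),
      (∑ j ∈ Finset.range (m + 1), ∑ s ∈ Finset.range (k + 1),
        ((-1 : ℝ)^j * (m.choose j) * (j.choose s))
          * ((-1 : ℝ)^k * (Nat.factorial k) * (n.choose k) * (1/a)^s / (Nat.factorial (k - s))))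
      = ((-1 : ℝ)^m * (Nat.factorial m) * (1/a)^m) * ((-1 : ℝ)^k * (n.choose k) * (k.choose m)) := by
    intro k _
    rw [Finset.sum_comm]
    have inner : ∀ s ∈ Finset.range (k + 1),
        (∑ j ∈ Finset.range (m + 1), ((-1 : ℝ)^j * (m.choose j) * (j.choose s))
          * ((-1 : ℝ)^k * (Nat.factorial k) * (n.choose k) * (1/a)^s / (Nat.factorial (k - s))))
        = if s = m then
            (-1 : ℝ)^m * ((-1 : ℝ)^k * (Nat.factorial k) * (n.choose k) * (1/a)^s
              / (Nat.factorial (k - s)))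
          else 0 := by
      intro s _
      rw [← Finset.sum_mul, alt_sum m s, ite_mul, zero_mul]
    rw [Finset.sum_congr rfl inner, Finset.sum_ite_eq']
    by_cases hmk : m ∈ Finset.range (k + 1)
    · rw [if_pos hmk]
      have hmk' : m ≤ k := Nat.lt_succ_iff.1 (Finset.mem_range.1 hmk)
      have hfac : ((k.choose m : ℕ) : ℝ) * (Nat.factorial m) * (Nat.factorial (k - m))
          = (Nat.factorial k) := by
        exact_mod_cast congrArg (Nat.cast : ℕ → ℝ)
          (Nat.choose_mul_factorial_mul_factorial hmk')
      have hkm : (Nat.factorial (k - m) : ℝ) ≠ 0 := by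
        exact_mod_cast (Nat.factorial_pos (k - m)).ne'
      rw [← hfac]
      field_simp
    · rw [if_neg hmk]
      have hkm : k < m := by
        have := Finset.mem_range.not.1 hmk
        omega
      rw [Nat.choose_eq_zero_of_lt hkm]
      simp
  rw [Finset.sum_congr rfl step3, ← Finset.mul_sum, alt_sum n m]
  by_cases hmn : m = n
  · subst hmn
    rw [if_pos rfl, if_pos rfl]
    have h1 : (-1 : ℝ)^m * (-1 : ℝ)^m = 1 := by rw [← mul_pow]; norm_num
    calc (-1 : ℝ)^m * (Nat.factorial m) * (1/a)^m * (-1 : ℝ)^m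
        = ((-1 : ℝ)^m * (-1 : ℝ)^m) * ((Nat.factorial m : ℝ) * (1/a)^m) := by ring
      _ = (Nat.factorial m : ℝ) / a ^ m := by
          rw [h1, one_mul, div_pow, one_pow]
          ring
  · rw [if_neg hmn, if_neg hmn, mul_zero]
end

section
/- Let π_H(x,N,a,b) = C(N,x)(a)_x(b)_{N−x}/(a+b)_N be the Hahn distribution. For a,b,c > 0, the matrix K(x,y) = ∑_{z=0}^{min(x,y)} π_H(x−z, N−z, b, c) π_H(z, y, a, b) satisfies detailed balance with respect to π_H(·, N, a+b, c): K(x,y)π_H(y,N,a+b,c) = K(y,x)π_H(x,N,a+b,c) for all x,y ∈ {0,...,N}. -/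
open Finset

/-- Hahn distribution `π_H(x,M,α,β) = C(M,x)(α)_x(β)_{M-x}/(α+β)_M`,
zero for `x > M` since `choose = 0`; `(c)_k = ∏_{j<k}(c+j)` is the Pochhammer symbol. -/
noncomputable def piH (x M : ℕ) (α β : ℝ) : ℝ :=
  (M.choose x : ℝ) * (∏ j ∈ Finset.range x, (α + j)) * (∏ j ∈ Finset.range (M - x), (β + j)) /
    (∏ j ∈ Finset.range M, (α + β + j))

private lemma poch_pos {α : ℝ} (hα : 0 < α) (k : ℕ) :
    0 < ∏ j ∈ Finset.range k, (α + j) := by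
  apply Finset.prod_pos
  intro j _
  positivity

theorem hahn_type_i_detailed_balance (N : ℕ) (a b c : ℝ)
    (ha : 0 < a) (hb : 0 < b) (hc : 0 < c)
    (K : ℕ → ℕ → ℝ)
    (hK : ∀ x y, K x y =
      ∑ z ∈ Finset.range (min x y + 1), piH (x - z) (N - z) b c * piH z y a b) :
    ∀ x ≤ N, ∀ y ≤ N,
      K x y * piH y N (a + b) c = K y x * piH x N (a + b) c := by
  intro x hx y hy
  rw [hK, hK, Finset.sum_mul, Finset.sum_mul, min_comm y x]
  apply Finset.sum_congr rfl
  intro z hz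
  rw [Finset.mem_range] at hz
  have hzx : z ≤ x := le_trans (Nat.lt_succ_iff.mp hz) (min_le_left _ _)
  have hzy : z ≤ y := le_trans (Nat.lt_succ_iff.mp hz) (min_le_right _ _)
  unfold piH
  have e1 : N - z - (x - z) = N - x := by omega
  have e2 : N - z - (y - z) = N - y := by omega
  rw [e1, e2]
  have key : ((N - z).choose (x - z) : ℝ) * (y.choose z) * (N.choose y) =
      ((N - z).choose (y - z) : ℝ) * (x.choose z) * (N.choose x) := by
    have h1 : N.choose y * y.choose z = N.choose z * (N - z).choose (y - z) :=
      Nat.choose_mul hzy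
    have h2 : N.choose x * x.choose z = N.choose z * (N - z).choose (x - z) :=
      Nat.choose_mul hzx
    have := congrArg (fun n : ℕ => (n : ℝ)) h1
    have := congrArg (fun n : ℕ => (n : ℝ)) h2
    push_cast at *
    nlinarith [this]
  have d1 : (∏ j ∈ Finset.range (N - z), (b + c + j)) ≠ 0 := (poch_pos (by linarith) _).ne'
  have d2 : (∏ j ∈ Finset.range y, (a + b + j)) ≠ 0 := (poch_pos (by linarith) _).ne'
  have d3 : (∏ j ∈ Finset.range x, (a + b + j)) ≠ 0 := (poch_pos (by linarith) _).ne'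
  have d4 : (∏ j ∈ Finset.range N, (a + b + c + j)) ≠ 0 := (poch_pos (by linarith) _).ne'
  field_simp
  linear_combination key
end
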